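/- Let {Λ_w} be a (C,C)-controlled continuous *-g-frame for U with frame transform T_Λ and frame operator S, and let K be an invertible adjointable operator on U. Then the set of all adjointable right inverses of KT_Λ* is exactly { T_Λ S⁻¹ K⁻¹ + (Id − T_Λ S⁻¹ T_Λ*) θ : θ ∈ End*_A(U, ⊕_w V_w) }. -/

import Mathlib

open MeasureTheory
open scoped ComplexOrder RightActions

noncomputable section

/-- The Hilbert C⋆-module class as it stood in Mathlib of December 2024 (right `A`-action
via `Aᵐᵒᵖ`, inner product `A`-linear on the right in the second argument). -/
class CStarModuleOld (A : outParam <| Type*) (E : Type*) [NonUnitalSemiring A] [StarRing A]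
    [Module ℂ A] [AddCommGroup E] [Module ℂ E] [PartialOrder A] [SMul Aᵐᵒᵖ E] [Norm A] [Norm E]
    extends Inner A E where
  inner_add_right {x} {y} {z} : inner x (y + z) = inner x y + inner x z
  inner_self_nonneg {x} : 0 ≤ inner x x
  inner_self {x} : inner x x = 0 ↔ x = 0
  inner_op_smul_right {a : A} {x y : E} : inner x (y <• a) = inner x y * a
  inner_smul_right_complex {z : ℂ} {x} {y} : inner x (z • y) = z • inner x y
  star_inner x y : star (inner x y) = inner y x
  norm_eq_sqrt_norm_inner_self x : ‖x‖ = √‖inner x x‖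

/-! If `L ∘ P = id`, every right inverse `G` of `L`
equals `P + (id - P ∘ L) ∘ G`, and conversely `id - P ∘ L` maps into the kernel of `L`.
For `L = K T_Λ*` take `P = T_Λ S⁻¹ K⁻¹`, a right inverse since `T_Λ* T_Λ S⁻¹ = id`;
then `P ∘ L = T_Λ S⁻¹ T_Λ*`. -/

namespace ContinuousLinearMap

variable {R M N : Type*} [Ring R]
  [TopologicalSpace M] [AddCommGroup M] [Module R M] [IsTopologicalAddGroup M]
  [TopologicalSpace N] [AddCommGroup N] [Module R N] [IsTopologicalAddGroup N]

theorem comp_eq_id_iff_exists_eq_add_sub_comp {L : M →L[R] N} {P : N →L[R] M}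
    (hLP : L.comp P = ContinuousLinearMap.id R N) (G : N →L[R] M) :
    L.comp G = ContinuousLinearMap.id R N ↔
      ∃ θ : N →L[R] M, G = P + (ContinuousLinearMap.id R M - P.comp L).comp θ := by
  constructor
  · intro hLG
    refine ⟨G, ?_⟩
    rw [sub_comp, comp_assoc, hLG, id_comp, comp_id]
    abel
  · rintro ⟨θ, rfl⟩
    have hL_kills : L.comp (ContinuousLinearMap.id R M - P.comp L) = 0 := by
      rw [comp_sub, comp_id, ← comp_assoc, hLP, id_comp, sub_self]
    rw [comp_add, hLP, ← comp_assoc, hL_kills, zero_comp, add_zero]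

end ContinuousLinearMap

theorem stmt17_general
    {U : Type*} [NormedAddCommGroup U] [NormedSpace ℂ U]
    {W : Type*} [NormedAddCommGroup W] [NormedSpace ℂ W]
    (T : U →L[ℂ] W) (Tadj : W →L[ℂ] U)
    (Sinv : U →L[ℂ] U)
    (hSinv : (Tadj.comp T).comp Sinv = ContinuousLinearMap.id ℂ U ∧
      Sinv.comp (Tadj.comp T) = ContinuousLinearMap.id ℂ U)
    (K Kinv : U →L[ℂ] U)
    (hKinv : K.comp Kinv = ContinuousLinearMap.id ℂ U ∧
      Kinv.comp K = ContinuousLinearMap.id ℂ U) :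
    ∀ G : U →L[ℂ] W,
      (K.comp Tadj).comp G = ContinuousLinearMap.id ℂ U ↔
      ∃ θ : U →L[ℂ] W,
        G = (T.comp Sinv).comp Kinv +
          (ContinuousLinearMap.id ℂ W - (T.comp Sinv).comp Tadj).comp θ := by
  have hRightInv : (K.comp Tadj).comp ((T.comp Sinv).comp Kinv) = ContinuousLinearMap.id ℂ U := by
    change K.comp (((Tadj.comp T).comp Sinv).comp Kinv) = _
    rw [hSinv.1, ContinuousLinearMap.id_comp, hKinv.1]
  have hProj : ((T.comp Sinv).comp Kinv).comp (K.comp Tadj) = (T.comp Sinv).comp Tadj := by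
    rw [ContinuousLinearMap.comp_assoc, ← Kinv.comp_assoc, hKinv.2, ContinuousLinearMap.id_comp]
  intro G
  rw [ContinuousLinearMap.comp_eq_id_iff_exists_eq_add_sub_comp hRightInv, hProj]

theorem stmt17 {A : Type*} [CStarAlgebra A] [PartialOrder A] [StarOrderedRing A]
    {U : Type*} [NormedAddCommGroup U] [NormedSpace ℂ U] [SMul Aᵐᵒᵖ U] [CStarModuleOld A U]
    {W : Type*} [NormedAddCommGroup W] [NormedSpace ℂ W] [SMul Aᵐᵒᵖ W] [CStarModuleOld A W]
    {Ω : Type*} [MeasurableSpace Ω] (μ : Measure Ω)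
    {V : Ω → Type*} [∀ w, NormedAddCommGroup (V w)] [∀ w, NormedSpace ℂ (V w)]
    [∀ w, SMul Aᵐᵒᵖ (V w)] [∀ w, CStarModuleOld A (V w)]
    (Λ : ∀ w, U →L[ℂ] V w)
    (C Cinv : U →L[ℂ] U)
    (hCinv : C.comp Cinv = ContinuousLinearMap.id ℂ U ∧ Cinv.comp C = ContinuousLinearMap.id ℂ U)
    (hCsa : ∀ x y : U, (inner A (C x) y : A) = inner A x (C y))
    (hCpos : ∀ x : U, (0 : A) ≤ inner A (C x) x)
    (T : U →L[ℂ] W) (Tadj : W →L[ℂ] U)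
    (hTadj : ∀ (x : U) (y : W), (inner A (T x) y : A) = inner A x (Tadj y))
    (hT : ∀ x : U, (inner A (T x) (T x) : A) = ∫ w, (inner A (Λ w (C x)) (Λ w (C x)) : A) ∂μ)
    (hframe : ∃ A₀ B₀ : Aˣ, ∀ x : U,
      (A₀ : A) * (inner A x x : A) * star (A₀ : A) ≤
        (∫ w, (inner A (Λ w (C x)) (Λ w (C x)) : A) ∂μ) ∧
      (∫ w, (inner A (Λ w (C x)) (Λ w (C x)) : A) ∂μ) ≤
        (B₀ : A) * (inner A x x : A) * star (B₀ : A))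
    (Sinv : U →L[ℂ] U)
    (hSinv : (Tadj.comp T).comp Sinv = ContinuousLinearMap.id ℂ U ∧
      Sinv.comp (Tadj.comp T) = ContinuousLinearMap.id ℂ U)
    (K Kinv : U →L[ℂ] U)
    (hKinv : K.comp Kinv = ContinuousLinearMap.id ℂ U ∧
      Kinv.comp K = ContinuousLinearMap.id ℂ U) :
    ∀ G : U →L[ℂ] W,
      (K.comp Tadj).comp G = ContinuousLinearMap.id ℂ U ↔
      ∃ θ : U →L[ℂ] W,
        G = (T.comp Sinv).comp Kinv +
          (ContinuousLinearMap.id ℂ W - (T.comp Sinv).comp Tadj).comp θ :=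
  stmt17_general T Tadj Sinv hSinv K Kinv hKinv
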